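/- Let a ∈ (0,1) and b > 0, and let (z_t) be an orbit of the scalar SAM map, z_{t+1} = a z_t − b·sign(z_t), whose iterates alternate strictly in sign (z_t z_{t+1} < 0 for all t). Then the amplitudes r_t = |z_t| satisfy r_{t+1} = b − a r_t for all t, and hence |z_t| converges to the exact two-cycle amplitude b/(1+a). -/

import Mathlib

/-!
While the orbit alternates in sign, each step moves `z` across the origin, so the amplitude
obeys the affine recursion `r ↦ b - a r`. This is a contraction with ratio `-a` and fixed point
`b / (1 + a)`, hence `|z_t| - b/(1+a) = (-a)^t (|z_0| - b/(1+a)) → 0`.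
-/

open Filter Topology

theorem sub_fixedPoint_of_affine_recurrence {c d : ℝ} (hc : c ≠ 1) {r : ℕ → ℝ}
    (hr : ∀ t, r (t + 1) = c * r t + d) (t : ℕ) :
    r t - d / (1 - c) = c ^ t * (r 0 - d / (1 - c)) := by
  have hfix : c * (d / (1 - c)) + d = d / (1 - c) := by
    field_simp [sub_ne_zero.mpr hc.symm]
    ring
  induction t with
  | zero => simp
  | succ n ih =>
    calc r (n + 1) - d / (1 - c) = c * (r n - d / (1 - c)) := by rw [hr n]; linarith
      _ = c ^ (n + 1) * (r 0 - d / (1 - c)) := by rw [ih]; ring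

theorem tendsto_of_affine_recurrence {c d : ℝ} (hc : |c| < 1) {r : ℕ → ℝ}
    (hr : ∀ t, r (t + 1) = c * r t + d) :
    Tendsto r atTop (𝓝 (d / (1 - c))) := by
  have hc1 : c ≠ 1 := fun h => by simp [h] at hc
  have hdecay : Tendsto (fun t => c ^ t * (r 0 - d / (1 - c))) atTop (𝓝 0) := by
    simpa using (tendsto_pow_atTop_nhds_zero_of_abs_lt_one hc).mul_const (r 0 - d / (1 - c))
  have hdiff : Tendsto (fun t => r t - d / (1 - c)) atTop (𝓝 0) :=
    hdecay.congr fun t => (sub_fixedPoint_of_affine_recurrence hc1 hr t).symm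
  simpa using hdiff.add_const (d / (1 - c))

theorem abs_sam_step_of_mul_neg {a b z : ℝ} (hflip : z * (a * z - b * Real.sign z) < 0) :
    |a * z - b * Real.sign z| = b - a * |z| := by
  rcases lt_trichotomy z 0 with hneg | hzero | hpos
  · rw [Real.sign_of_neg hneg] at hflip ⊢
    have hnext : 0 < a * z - b * -1 := pos_of_mul_neg_right hflip hneg.le
    rw [abs_of_pos hnext, abs_of_neg hneg]
    ring
  · simp [hzero] at hflip
  · rw [Real.sign_of_pos hpos] at hflip ⊢
    have hnext : a * z - b * 1 < 0 := neg_of_mul_neg_right hflip hpos.le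
    rw [abs_of_neg hnext, abs_of_pos hpos]
    ring

theorem scalar_sam_alternating_two_cycle_general (a b : ℝ) (ha : a ∈ Set.Ioo (0:ℝ) 1)
    (z : ℕ → ℝ) (hz : ∀ t, z (t + 1) = a * z t - b * Real.sign (z t))
    (halt : ∀ t, z t * z (t + 1) < 0) :
    (∀ t, |z (t + 1)| = b - a * |z t|) ∧
    Filter.Tendsto (fun t => |z t|) Filter.atTop (nhds (b / (1 + a))) := by
  have hamp : ∀ t, |z (t + 1)| = b - a * |z t| := fun t => by
    have hflip := halt t
    rw [hz t] at hflip ⊢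
    exact abs_sam_step_of_mul_neg hflip
  have hcontr : |-a| < 1 := by
    rw [abs_neg, abs_of_pos ha.1]
    exact ha.2
  refine ⟨hamp, ?_⟩
  simpa using tendsto_of_affine_recurrence hcontr fun t => by rw [hamp t]; ring

/-- If an orbit of the scalar SAM map `z_{t+1} = a z_t - b sign z_t` alternates
strictly in sign, then its amplitudes satisfy `|z_{t+1}| = b - a |z_t|`, and
`|z_t|` converges to the exact two-cycle amplitude `b/(1+a)`. -/
theorem scalar_sam_alternating_two_cycle (a b : ℝ) (ha : a ∈ Set.Ioo (0:ℝ) 1) (hb : 0 < b)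
    (z : ℕ → ℝ) (hz : ∀ t, z (t + 1) = a * z t - b * Real.sign (z t))
    (halt : ∀ t, z t * z (t + 1) < 0) :
    (∀ t, |z (t + 1)| = b - a * |z t|) ∧
    Filter.Tendsto (fun t => |z t|) Filter.atTop (nhds (b / (1 + a))) :=
  scalar_sam_alternating_two_cycle_general a b ha z hz halt
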